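/- Fix a deterministic complete transition structure T with state set {1,...,n}, an integer ℓ with 1 ≤ ℓ < n, and states p ≠ q, p' ≠ q' such that F_ℓ(p,q,p',q') is nonempty. Let u be a word of length ℓ with p·u = p' and q·u = q'. Then the undirected graph on vertex set {1,...,n} whose edges are the pairs {p·v, q·v}, for v ranging over the proper prefixes of u (of length 0 to ℓ−1), is acyclic (a forest), has no loops (p·v ≠ q·v for each such v), and has exactly ℓ distinct edges. -/

import Mathlib

def run {Q A : Type*} (δ : Q → A → Q) (p : Q) (u : List A) : Q := u.foldl δ p

def iEquiv {Q A : Type*} (δ : Q → A → Q) (F : Set Q) (i : ℕ) (p q : Q) : Prop :=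
  ∀ u : List A, u.length ≤ i → (run δ p u ∈ F ↔ run δ q u ∈ F)

private lemma run_append {Q A : Type*} (δ : Q → A → Q) (p : Q) (u v : List A) :
    run δ p (u ++ v) = run δ (run δ p u) v :=
  List.foldl_append

private lemma iEquiv_refl {Q A : Type*} (δ : Q → A → Q) (F : Set Q) (m : ℕ) (p : Q) :
    iEquiv δ F m p p := fun _ _ => Iff.rfl

private lemma iEquiv_symm {Q A : Type*} {δ : Q → A → Q} {F : Set Q} {m : ℕ} {p q : Q}
    (h : iEquiv δ F m p q) : iEquiv δ F m q p :=
  fun u hu => (h u hu).symm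

private lemma iEquiv_trans {Q A : Type*} {δ : Q → A → Q} {F : Set Q} {m : ℕ} {p q r : Q}
    (h1 : iEquiv δ F m p q) (h2 : iEquiv δ F m q r) : iEquiv δ F m p r :=
  fun u hu => (h1 u hu).trans (h2 u hu)

private lemma iEquiv_mono {Q A : Type*} {δ : Q → A → Q} {F : Set Q} {i j : ℕ} {p q : Q}
    (h : iEquiv δ F i p q) (hj : j ≤ i) : iEquiv δ F j p q :=
  fun u hu => h u (hu.trans hj)

private lemma walk_equiv {Q A : Type*} (δ : Q → A → Q) (F : Set Q) (m : ℕ)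
    {G : SimpleGraph Q} : ∀ {x y : Q} (W : G.Walk x y),
    (∀ s t : Q, s(s, t) ∈ W.edges → iEquiv δ F m s t) → iEquiv δ F m x y := by
  intro x y W
  induction W with
  | nil => exact fun _ => iEquiv_refl δ F m _
  | @cons x x' y h W ih =>
    intro hW
    exact iEquiv_trans (hW x x' (by simp)) (ih fun s t hst => hW s t (by simp [hst]))

private lemma walk_equiv_split {Q A : Type*} (δ : Q → A → Q) (F : Set Q) (m : ℕ)
    {G : SimpleGraph Q} {s t : Q} :
    ∀ {x y : Q} (W : G.Walk x y), W.edges.Nodup → s(s, t) ∈ W.edges →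
    (∀ a b : Q, s(a, b) ∈ W.edges → s(a, b) ≠ s(s, t) → iEquiv δ F m a b) →
    (iEquiv δ F m x s ∧ iEquiv δ F m y t) ∨ (iEquiv δ F m x t ∧ iEquiv δ F m y s) := by
  intro x y W
  induction W with
  | nil => simp
  | @cons x x' y h W ih =>
    intro hnd he hR
    rw [SimpleGraph.Walk.edges_cons] at he hnd
    have hnd1 : s(x, x') ∉ W.edges := (List.nodup_cons.mp hnd).1
    have hnd2 : W.edges.Nodup := (List.nodup_cons.mp hnd).2
    rcases List.mem_cons.mp he with heq | he'
    · have hR' : ∀ a b : Q, s(a, b) ∈ W.edges → iEquiv δ F m a b := by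
        intro a b hab
        refine hR a b (by simp [hab]) ?_
        rw [heq]
        intro hcon
        rw [hcon] at hab
        exact hnd1 hab
      have hx'y : iEquiv δ F m x' y := walk_equiv δ F m W hR'
      rcases Sym2.eq_iff.mp heq.symm with ⟨hs, ht⟩ | ⟨hs, ht⟩
      · subst hs; subst ht
        exact Or.inl ⟨iEquiv_refl δ F m _, iEquiv_symm hx'y⟩
      · subst hs; subst ht
        exact Or.inr ⟨iEquiv_refl δ F m _, iEquiv_symm hx'y⟩
    · have hxx' : iEquiv δ F m x x' := by
        refine hR x x' (by simp) ?_
        intro hcon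
        rw [hcon] at hnd1
        exact hnd1 he'
      rcases ih hnd2 he' (fun a b hab hne => hR a b (by simp [hab]) hne) with ⟨h1, h2⟩ | ⟨h1, h2⟩
      · exact Or.inl ⟨iEquiv_trans hxx' h1, h2⟩
      · exact Or.inr ⟨iEquiv_trans hxx' h1, h2⟩

theorem stmt6 {A : Type*} [Fintype A] (n ℓ : ℕ) (hl : 1 ≤ ℓ) (hln : ℓ < n)
    (δ : Fin n → A → Fin n) (p q p' q' : Fin n) (hpq : p ≠ q) (hp'q' : p' ≠ q')
    (hne : ∃ F : Set (Fin n), iEquiv δ F (ℓ - 1) p q ∧ Xor' (p' ∈ F) (q' ∈ F) ∧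
      ∃ w : List A, w.length = ℓ ∧ run δ p w = p' ∧ run δ q w = q')
    (u : List A) (hu : u.length = ℓ) (hup : run δ p u = p') (huq : run δ q u = q') :
    (SimpleGraph.fromRel (fun s t => ∃ v : List A, v <+: u ∧ v.length < ℓ ∧
        run δ p v = s ∧ run δ q v = t)).IsAcyclic ∧
    (∀ v : List A, v <+: u → v.length < ℓ → run δ p v ≠ run δ q v) ∧
    (SimpleGraph.fromRel (fun s t => ∃ v : List A, v <+: u ∧ v.length < ℓ ∧
        run δ p v = s ∧ run δ q v = t)).edgeSet.ncard = ℓ := by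
  classical
  obtain ⟨F, hF, hxor, -⟩ := hne
  set G := SimpleGraph.fromRel (fun s t => ∃ v : List A, v <+: u ∧ v.length < ℓ ∧
      run δ p v = s ∧ run δ q v = t) with hG
  have hlen : ∀ i, i < ℓ → (u.take i).length = i := fun i hi => by
    simp [List.length_take, hu]; omega
  have hA : ∀ i, i < ℓ → iEquiv δ F (ℓ - 1 - i) (run δ p (u.take i)) (run δ q (u.take i)) := by
    intro i hi w hw
    rw [← run_append, ← run_append]
    exact hF _ (by simp only [List.length_append, hlen i hi]; omega)
  have hB : ∀ i, i < ℓ → ¬ iEquiv δ F (ℓ - i) (run δ p (u.take i)) (run δ q (u.take i)) := by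
    intro i hi h
    have hdl : (u.drop i).length ≤ ℓ - i := by simp [hu]
    have := h (u.drop i) hdl
    rw [← run_append, ← run_append, List.take_append_drop, hup, huq] at this
    rcases hxor with ⟨h1, h2⟩ | ⟨h1, h2⟩ <;> tauto
  have hloop : ∀ v : List A, v <+: u → v.length < ℓ → run δ p v ≠ run δ q v := by
    intro v hv hvl heq
    obtain ⟨w, rfl⟩ := hv
    apply hp'q'
    rw [← hup, ← huq, run_append, run_append, heq]
  have hmemG : ∀ i, i < ℓ → G.Adj (run δ p (u.take i)) (run δ q (u.take i)) := by
    intro i hi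
    rw [hG, SimpleGraph.fromRel_adj]
    exact ⟨hloop _ (List.take_prefix _ _) (by rw [hlen i hi]; exact hi),
      Or.inl ⟨u.take i, List.take_prefix _ _, by rw [hlen i hi]; exact hi, rfl, rfl⟩⟩
  have hchar : ∀ x ∈ G.edgeSet, ∃ i, i < ℓ ∧
      x = s(run δ p (u.take i), run δ q (u.take i)) := by
    intro x hx
    induction x using Sym2.ind with
    | _ a b =>
      rw [SimpleGraph.mem_edgeSet, hG, SimpleGraph.fromRel_adj] at hx
      obtain ⟨hab, hE | hE⟩ := hx
      · obtain ⟨v, hv, hvl, ha, hb⟩ := hE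
        refine ⟨v.length, hvl, ?_⟩
        subst ha; subst hb
        have hveq : v = List.take v.length u := List.prefix_iff_eq_take.mp hv
        rw [← hveq]
      · obtain ⟨v, hv, hvl, ha, hb⟩ := hE
        refine ⟨v.length, hvl, ?_⟩
        subst ha; subst hb
        have hveq : v = List.take v.length u := List.prefix_iff_eq_take.mp hv
        rw [Sym2.eq_swap, ← hveq]
  have hinj : ∀ i j, i < ℓ → j < ℓ →
      s(run δ p (u.take i), run δ q (u.take i)) = s(run δ p (u.take j), run δ q (u.take j)) →
      i = j := by
    intro i j hi hj hij
    by_contra hne'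
    wlog hlt : i < j generalizing i j
    · exact this j i hj hi hij.symm (Ne.symm hne') (by omega)
    have hAi := hA i hi
    rcases Sym2.eq_iff.mp hij with ⟨h1, h2⟩ | ⟨h1, h2⟩
    · rw [h1, h2] at hAi
      exact hB j hj (iEquiv_mono hAi (by omega))
    · rw [h1, h2] at hAi
      exact hB j hj (iEquiv_mono (iEquiv_symm hAi) (by omega))
  have hcard : G.edgeSet.ncard = ℓ := by
    have hrange : G.edgeSet =
        Set.range (fun i : Fin ℓ => s(run δ p (u.take ↑i), run δ q (u.take ↑i))) := by
      ext x
      constructor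
      · intro hx
        obtain ⟨i, hi, hxi⟩ := hchar x hx
        exact ⟨⟨i, hi⟩, hxi.symm⟩
      · rintro ⟨i, rfl⟩
        exact (G.mem_edgeSet).mpr (hmemG i i.2)
    rw [hrange, ← Set.image_univ,
      Set.ncard_image_of_injective _ (fun i j hij => Fin.ext (hinj i j i.2 j.2 hij)),
      Set.ncard_univ, Nat.card_eq_fintype_card, Fintype.card_fin]
  have hacyc : G.IsAcyclic := by
    intro a c hc
    have hndp : c.edges.Nodup := hc.edges_nodup
    have hne0 : c.edges ≠ [] := by
      have h3 := hc.three_le_length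
      intro h
      rw [← SimpleGraph.Walk.length_edges, h] at h3
      simp at h3
    obtain ⟨x0, hx0⟩ := List.exists_mem_of_ne_nil _ hne0
    obtain ⟨i0', hi0', hx0eq⟩ := hchar x0 (c.edges_subset_edgeSet hx0)
    set S : Finset ℕ := (Finset.range ℓ).filter
      (fun i => s(run δ p (u.take i), run δ q (u.take i)) ∈ c.edges) with hS
    have hSne : S.Nonempty := by
      refine ⟨i0', ?_⟩
      rw [hS, Finset.mem_filter, Finset.mem_range]
      exact ⟨hi0', hx0eq ▸ hx0⟩
    set i₀ := S.max' hSne with hi₀def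
    have hi₀S : i₀ ∈ S := S.max'_mem hSne
    have hi₀ℓ : i₀ < ℓ := Finset.mem_range.mp (Finset.mem_filter.mp hi₀S).1
    have hi₀c : s(run δ p (u.take i₀), run δ q (u.take i₀)) ∈ c.edges :=
      (Finset.mem_filter.mp hi₀S).2
    have hother : ∀ a' b' : Fin n, s(a', b') ∈ c.edges →
        s(a', b') ≠ s(run δ p (u.take i₀), run δ q (u.take i₀)) →
        iEquiv δ F (ℓ - i₀) a' b' := by
      intro a' b' hab hne'
      obtain ⟨i, hi, habeq⟩ := hchar _ (c.edges_subset_edgeSet hab)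
      have hiS : i ∈ S := by
        rw [hS, Finset.mem_filter, Finset.mem_range]
        exact ⟨hi, habeq ▸ hab⟩
      have hile : i ≤ i₀ := S.le_max' i hiS
      have hine : i ≠ i₀ := fun h => hne' (by rw [habeq, h])
      have hilt : i < i₀ := lt_of_le_of_ne hile hine
      have hthis : iEquiv δ F (ℓ - i₀) (run δ p (u.take i)) (run δ q (u.take i)) :=
        iEquiv_mono (hA i hi) (by omega)
      rcases Sym2.eq_iff.mp habeq with ⟨h1, h2⟩ | ⟨h1, h2⟩
      · rw [← h1, ← h2] at hthis; exact hthis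
      · rw [← h1, ← h2] at hthis
        exact iEquiv_symm hthis
    rcases walk_equiv_split δ F (ℓ - i₀) c hndp hi₀c hother with ⟨h1, h2⟩ | ⟨h1, h2⟩
    · exact hB i₀ hi₀ℓ (iEquiv_trans (iEquiv_symm h1) h2)
    · exact hB i₀ hi₀ℓ (iEquiv_symm (iEquiv_trans (iEquiv_symm h1) h2))
  exact ⟨hacyc, hloop, hcard⟩
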